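/- arXiv:1408.6433 — 5 statements merged into one kernel-verified Lean document; each statement's English description precedes it below -/
import Mathlib

section
/- Let E and F be real Banach spaces, U ⊆ E open, and f : U → F a map which is analytic at every point of U. Suppose a ∈ U and the Fréchet derivative Df(a) : E → F is a topological linear isomorphism (a continuous linear bijection with continuous inverse). Then f is a local analytic isomorphism at a: there exist open neighborhoods V ⊆ U of a and W ⊆ F of f(a) such that f restricts to a bijection from V onto W whose inverse map W → V is analytic at every point of W. -/
/-!
By the inverse function theorem `f` restricts to a homeomorphism between open neighbourhoods
of `a` and `f a`, and shrinking the source we may assume that `f` is analytic with invertible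
derivative at every point of it (invertibility is an open condition and `f'` is continuous).
The inverse of an analytic local homeomorphism is analytic at every image point where the
derivative is invertible, by inverting the power series.
-/

open Set Topology

section

variable {𝕜 : Type*} [NontriviallyNormedField 𝕜]
  {E : Type*} [NormedAddCommGroup E] [NormedSpace 𝕜 E]
  {F : Type*} [NormedAddCommGroup F] [NormedSpace 𝕜 F]

theorem ContDiffOn.isOpen_setOf_fderiv_isInvertible [CompleteSpace E] {f : E → F} {U : Set E}
    (hf : ContDiffOn 𝕜 1 f U) (hU : IsOpen U) :
    IsOpen {x ∈ U | (fderiv 𝕜 f x).IsInvertible} :=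
  (hf.continuousOn_fderiv_of_isOpen hU le_rfl).isOpen_inter_preimage hU
    ContinuousLinearEquiv.isOpen

theorem HasStrictFDerivAt.exists_openPartialHomeomorph_source_subset [CompleteSpace E]
    {f : E → F} {f' : E ≃L[𝕜] F} {a : E} (hf : HasStrictFDerivAt f (f' : E →L[𝕜] F) a)
    {s : Set E} (hs : s ∈ 𝓝 a) :
    ∃ e : OpenPartialHomeomorph E F, ⇑e = f ∧ a ∈ e.source ∧ e.source ⊆ s := by
  let e := (hf.toOpenPartialHomeomorph f).restrOpen (interior s) isOpen_interior
  have he_source : e.source = (hf.toOpenPartialHomeomorph f).source ∩ interior s :=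
    OpenPartialHomeomorph.restrOpen_source _ _ _
  refine ⟨e, hf.toOpenPartialHomeomorph_coe, ?_, ?_⟩
  · rw [he_source]
    exact ⟨hf.mem_toOpenPartialHomeomorph_source, mem_interior_iff_mem_nhds.2 hs⟩
  · rw [he_source]
    exact inter_subset_right.trans interior_subset

theorem OpenPartialHomeomorph.analyticOnNhd_symm (e : OpenPartialHomeomorph E F)
    (he : ∀ x ∈ e.source, AnalyticAt 𝕜 e x)
    (he' : ∀ x ∈ e.source, (fderiv 𝕜 e x).IsInvertible) :
    AnalyticOnNhd 𝕜 e.symm e.target := fun y hy ↦ by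
  obtain ⟨i, hi⟩ := he' _ (e.map_target hy)
  exact e.analyticAt_symm hy (he _ (e.map_target hy)) hi.symm

end

theorem analytic_inverse_function_theorem_general
    {E F : Type*} [NormedAddCommGroup E] [NormedSpace ℝ E] [CompleteSpace E]
    [NormedAddCommGroup F] [NormedSpace ℝ F]
    (U : Set E) (hU : IsOpen U) (f : E → F)
    (hf : ∀ x ∈ U, AnalyticAt ℝ f x)
    (a : E) (ha : a ∈ U)
    (hiso : ∃ L : E ≃L[ℝ] F, (L : E →L[ℝ] F) = fderiv ℝ f a) :
    ∃ (V : Set E) (W : Set F), IsOpen V ∧ IsOpen W ∧ a ∈ V ∧ V ⊆ U ∧ f a ∈ W ∧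
      Set.BijOn f V W ∧
      ∃ g : F → E, Set.InvOn g f V W ∧ ∀ y ∈ W, AnalyticAt ℝ g y := by
  obtain ⟨L, hL⟩ := hiso
  set T := {x ∈ U | (fderiv ℝ f x).IsInvertible}
  have hT : IsOpen T :=
    (AnalyticOnNhd.contDiffOn hf hU.uniqueDiffOn).isOpen_setOf_fderiv_isInvertible hU
  have hf_strict : HasStrictFDerivAt f (L : E →L[ℝ] F) a := hL ▸ (hf a ha).hasStrictFDerivAt
  obtain ⟨e, rfl, ha_source, h_source⟩ :=
    hf_strict.exists_openPartialHomeomorph_source_subset (hT.mem_nhds ⟨ha, L, hL⟩)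
  refine ⟨e.source, e.target, e.open_source, e.open_target, ha_source,
    fun x hx ↦ (h_source hx).1, e.map_source ha_source, e.bijOn, e.symm, e.invOn, ?_⟩
  exact e.analyticOnNhd_symm (fun x hx ↦ hf x (h_source hx).1) (fun x hx ↦ (h_source hx).2)

/-- analytic inverse function theorem, Douady: if `f : U → F` is
analytic at every point of the open set `U ⊆ E` and its Fréchet derivative at
`a ∈ U` is a topological linear isomorphism, then `f` is a local analytic
isomorphism at `a`. -/
theorem analytic_inverse_function_theorem
    {E F : Type*} [NormedAddCommGroup E] [NormedSpace ℝ E] [CompleteSpace E]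
    [NormedAddCommGroup F] [NormedSpace ℝ F] [CompleteSpace F]
    (U : Set E) (hU : IsOpen U) (f : E → F)
    (hf : ∀ x ∈ U, AnalyticAt ℝ f x)
    (a : E) (ha : a ∈ U)
    (hiso : ∃ L : E ≃L[ℝ] F, (L : E →L[ℝ] F) = fderiv ℝ f a) :
    ∃ (V : Set E) (W : Set F), IsOpen V ∧ IsOpen W ∧ a ∈ V ∧ V ⊆ U ∧ f a ∈ W ∧
      Set.BijOn f V W ∧
      ∃ g : F → E, Set.InvOn g f V W ∧ ∀ y ∈ W, AnalyticAt ℝ g y :=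
  analytic_inverse_function_theorem_general U hU f hf a ha hiso
end

section
/- Let E, F, G be real Banach spaces, U ⊆ E and V ⊆ F open sets, and f : U × V → G a map which is analytic at every point of U × V. Let (a,b) ∈ U × V with f(a,b) = 0, and assume that the partial Fréchet derivative in the second variable D₂f(a,b) : F → G (the restriction of the total derivative Df(a,b) to the subspace {0} × F) is a topological linear isomorphism. Then there exist an open neighborhood U₀ ⊆ U of a and an analytic map g : U₀ → V such that g(a) = b and f(x, g(x)) = 0 for all x ∈ U₀. -/
open Filter Topology ContDiff

/- An analytic map is `C^ω`, so the `C^n` implicit function theorem applies with `n = ω`; its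
implicit function is then `C^ω` at the base point, i.e. analytic there, hence analytic on a
neighbourhood. -/

theorem AnalyticAt.exists_eventually_implicitFunction {𝕜 : Type*} [RCLike 𝕜]
    {E₁ E₂ F : Type*} [NormedAddCommGroup E₁] [NormedSpace 𝕜 E₁] [CompleteSpace E₁]
    [NormedAddCommGroup E₂] [NormedSpace 𝕜 E₂] [CompleteSpace E₂]
    [NormedAddCommGroup F] [NormedSpace 𝕜 F] [CompleteSpace F]
    {f : E₁ × E₂ → F} {u : E₁ × E₂} (hf : AnalyticAt 𝕜 f u)
    (hinv : (fderiv 𝕜 f u ∘L .inr 𝕜 E₁ E₂).IsInvertible) :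
    ∃ g : E₁ → E₂, g u.1 = u.2 ∧ ∀ᶠ x in 𝓝 u.1, f (x, g x) = f u ∧ AnalyticAt 𝕜 g x := by
  have hω : ContDiffAt 𝕜 ω f u := hf.contDiffAt
  have hgω : AnalyticAt 𝕜 (hω.implicitFunction (by simp) hinv) u.1 :=
    (hω.contDiffAt_implicitFunction (by simp) hinv).analyticAt
  exact ⟨_, hω.implicitFunction_apply_self _ hinv,
    (hω.eventually_apply_implicitFunction _ hinv).and hgω.eventually_analyticAt⟩

/-- analytic implicit function theorem: if `f : U × V → G` is
analytic at every point, `f (a, b) = 0`, and the partial derivative of `f` at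
`(a, b)` in the second variable is a topological linear isomorphism `F ≃ G`,
then near `a` there is an analytic map `g` with `g a = b` and `f (x, g x) = 0`. -/
theorem analytic_implicit_function_theorem
    {E F G : Type*} [NormedAddCommGroup E] [NormedSpace ℝ E] [CompleteSpace E]
    [NormedAddCommGroup F] [NormedSpace ℝ F] [CompleteSpace F]
    [NormedAddCommGroup G] [NormedSpace ℝ G] [CompleteSpace G]
    (U : Set E) (V : Set F) (hU : IsOpen U) (hV : IsOpen V)
    (f : E × F → G) (hf : ∀ p ∈ U ×ˢ V, AnalyticAt ℝ f p)
    (a : E) (b : F) (ha : a ∈ U) (hb : b ∈ V) (hab : f (a, b) = 0)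
    (hiso : ∃ L : F ≃L[ℝ] G, ∀ w : F, L w = fderiv ℝ f (a, b) (0, w)) :
    ∃ U₀ : Set E, IsOpen U₀ ∧ a ∈ U₀ ∧ U₀ ⊆ U ∧
      ∃ g : E → F, g a = b ∧
        (∀ x ∈ U₀, g x ∈ V) ∧
        (∀ x ∈ U₀, f (x, g x) = 0) ∧
        (∀ x ∈ U₀, AnalyticAt ℝ g x) := by
  obtain ⟨L, hL⟩ := hiso
  have hinv : (fderiv ℝ f (a, b) ∘L .inr ℝ E F).IsInvertible :=
    ⟨L, ContinuousLinearMap.ext hL⟩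
  obtain ⟨g, hga, hg⟩ := (hf (a, b) ⟨ha, hb⟩).exists_eventually_implicitFunction hinv
  have hgV : ∀ᶠ x in 𝓝 a, g x ∈ V :=
    hg.self_of_nhds.2.continuousAt.preimage_mem_nhds (hga ▸ hV.mem_nhds hb)
  obtain ⟨U₀, hU₀, hU₀o, haU₀⟩ := eventually_nhds_iff.mp ((hg.and hgV).and (hU.mem_nhds ha))
  refine ⟨U₀, hU₀o, haU₀, fun x hx => (hU₀ x hx).2, g, hga, fun x hx => (hU₀ x hx).1.2,
    fun x hx => ?_, fun x hx => (hU₀ x hx).1.1.2⟩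
  rw [(hU₀ x hx).1.1.1, hab]
end

section
/- For all vectors v₁, v₂, v₃ ∈ ℂ³ the following identity holds: |Φ(v₁,v₂,v₃)|² + Σ_{j=1}^{3} |(dz_j ∧ ω)(v₁,v₂,v₃)|² = det G, where G is the 3×3 real Gram matrix with entries G_{ik} = Re⟨v_i, v_k⟩. -/
/-!
With `A` the complex matrix whose columns are the `vᵢ`, the Hermitian Gram matrix is
`H = Aᴴ A = G + i Ω`, where `G = (Re⟨vᵢ, vₖ⟩)` and `Ω = (ω(vᵢ, vₖ))`, so `|Φ|² = det H`.
For a `3 × 3` Hermitian matrix, the real part of `det (G + i Ω)` is `det G - wᵀ G w`, with `w`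
built from the off-diagonal entries of `Ω`. On the other hand `(dz_j ∧ ω)(v)` is the `j`-th
coordinate of `∑ᵢ wᵢ vᵢ`, whose squared norm is `wᵀ G w`.
-/

open scoped BigOperators

/-- The complex volume form `Φ = dz₁ ∧ dz₂ ∧ dz₃` on `ℂ³`, evaluated on the triple
of vectors `v 0, v 1, v 2`: the determinant of the complex matrix with columns
`v 0, v 1, v 2`. -/
noncomputable def PhiForm (v : Fin 3 → EuclideanSpace ℂ (Fin 3)) : ℂ :=
  (Matrix.of fun i j : Fin 3 => v j i).det

/-- The fundamental (Kähler) 2-form `ω(x, y) = Im ⟨x, y⟩` on `ℂ³`. -/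
noncomputable def omegaForm (x y : EuclideanSpace ℂ (Fin 3)) : ℝ :=
  (inner ℂ x y : ℂ).im

/-- `(dz_j ∧ ω)(v₁, v₂, v₃) = dz_j(v₁) ω(v₂,v₃) − dz_j(v₂) ω(v₁,v₃) + dz_j(v₃) ω(v₁,v₂)`. -/
noncomputable def dzWedgeOmega (j : Fin 3) (v : Fin 3 → EuclideanSpace ℂ (Fin 3)) : ℂ :=
  v 0 j * (omegaForm (v 1) (v 2) : ℝ)
    - v 1 j * (omegaForm (v 0) (v 2) : ℝ)
    + v 2 j * (omegaForm (v 0) (v 1) : ℝ)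

open Matrix

theorem Matrix.norm_det_sq_eq_re_det_conjTranspose_mul {n : Type*} [Fintype n] [DecidableEq n]
    (A : Matrix n n ℂ) : ‖A.det‖ ^ 2 = (Aᴴ * A).det.re := by
  rw [det_mul, det_conjTranspose, ← starRingEnd_apply, ← Complex.normSq_eq_conj_mul_self,
    Complex.ofReal_re, Complex.sq_norm]

/-- Up to sign the axial vector of an antisymmetric `Ω`; this sign matches the cofactor
expansion in `dzWedgeOmega`. -/
def Matrix.axialVector {R : Type*} [Neg R] (Ω : Matrix (Fin 3) (Fin 3) R) : Fin 3 → R :=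
  ![Ω 1 2, -Ω 0 2, Ω 0 1]

theorem Matrix.IsHermitian.re_det_fin_three {H : Matrix (Fin 3) (Fin 3) ℂ} (hH : H.IsHermitian) :
    H.det.re = (H.map Complex.re).det
      - (H.map Complex.im).axialVector ⬝ᵥ (H.map Complex.re *ᵥ (H.map Complex.im).axialVector) := by
  have hconj (i j : Fin 3) : H j i = starRingEnd ℂ (H i j) := (hH.apply j i).symm
  have him (i : Fin 3) : (H i i).im = 0 := Complex.conj_eq_iff_im.mp (hH.apply i i)
  simp only [det_fin_three, axialVector, dotProduct, mulVec, Fin.sum_univ_three, map_apply,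
    Matrix.cons_val, hconj 0 1, hconj 0 2, hconj 1 2, Complex.mul_re, Complex.mul_im,
    Complex.sub_re, Complex.add_re, Complex.conj_re, Complex.conj_im, him]
  ring

theorem norm_sum_ofReal_smul_sq {𝕜 E ι : Type*} [RCLike 𝕜] [NormedAddCommGroup E]
    [InnerProductSpace 𝕜 E] [Fintype ι] (c : ι → ℝ) (v : ι → E) :
    ‖∑ i, (c i : 𝕜) • v i‖ ^ 2 = c ⬝ᵥ ((gram 𝕜 v).map RCLike.re *ᵥ c) := by
  rw [@norm_sq_eq_re_inner 𝕜, sum_inner]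
  simp only [inner_sum, inner_smul_left, inner_smul_right, dotProduct, mulVec, map_apply,
    gram_apply, RCLike.conj_ofReal, map_sum, Finset.mul_sum]
  refine Finset.sum_congr rfl fun i _ => Finset.sum_congr rfl fun k _ => ?_
  rw [← mul_assoc, ← RCLike.ofReal_mul, RCLike.re_ofReal_mul]
  ring

theorem norm_PhiForm_sq (v : Fin 3 → EuclideanSpace ℂ (Fin 3)) :
    ‖PhiForm v‖ ^ 2 = (gram ℂ v).det.re := by
  rw [gram_eq_conjTranspose_mul (EuclideanSpace.basisFun (Fin 3) ℂ),
    ← norm_det_sq_eq_re_det_conjTranspose_mul]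
  simp [PhiForm]

theorem dzWedgeOmega_eq_sum_smul_apply (j : Fin 3) (v : Fin 3 → EuclideanSpace ℂ (Fin 3)) :
    dzWedgeOmega j v = (∑ i, (((gram ℂ v).map Complex.im).axialVector i : ℂ) • v i) j := by
  simp only [dzWedgeOmega, omegaForm, axialVector, map_apply, gram_apply, Complex.coe_smul,
    Fin.sum_univ_three, cons_val_zero, cons_val_one, neg_smul, cons_val, PiLp.add_apply,
    PiLp.smul_apply, Complex.real_smul, PiLp.neg_apply]
  ring

theorem sum_norm_dzWedgeOmega_sq (v : Fin 3 → EuclideanSpace ℂ (Fin 3)) :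
    ∑ j, ‖dzWedgeOmega j v‖ ^ 2 = ((gram ℂ v).map Complex.im).axialVector ⬝ᵥ
      ((gram ℂ v).map Complex.re *ᵥ ((gram ℂ v).map Complex.im).axialVector) := by
  simp_rw [dzWedgeOmega_eq_sum_smul_apply, ← EuclideanSpace.norm_sq_eq]
  exact norm_sum_ofReal_smul_sq _ v

/-- for all `v₁, v₂, v₃ ∈ ℂ³`,
`|Φ(v₁,v₂,v₃)|² + ∑_j |(dz_j ∧ ω)(v₁,v₂,v₃)|² = det (Re⟨v_i, v_k⟩)_{ik}`. -/
theorem abs_Phi_sq_add_sum_abs_dz_wedge_omega_sq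
    (v : Fin 3 → EuclideanSpace ℂ (Fin 3)) :
    ‖PhiForm v‖ ^ 2
      + ∑ j : Fin 3, ‖dzWedgeOmega j v‖ ^ 2
    = (Matrix.of fun i k : Fin 3 => (inner ℂ (v i) (v k) : ℂ).re).det := by
  rw [norm_PhiForm_sq, (isHermitian_gram ℂ v).re_det_fin_three, sum_norm_dzWedgeOmega_sq,
    sub_add_cancel]
  rfl
end

section
/- Let v₁, v₂, v₃ ∈ ℂ³ be orthonormal with respect to the real inner product Re⟨·,·⟩. Then |Φ(v₁,v₂,v₃)| ≤ 1, and equality holds if and only if ω(v_j, v_k) = 0 for all j, k ∈ {1,2,3}, i.e., if and only if the real span of v₁, v₂, v₃ is a Lagrangian subspace of ℂ³. -/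
/-!
With `M` the matrix of columns `v j`, the Gram matrix of `v` is `Mᴴ M`, so `‖Φ(v)‖² = det (gram v)`.
Real orthonormality makes `gram v = 1 + i Ω` with `Ω j k = ω(v j, v k)` real antisymmetric, and
for a `3 × 3` matrix this gives `det (1 + i Ω) = 1 - (Ω₀₁² + Ω₀₂² + Ω₁₂²)`. Both the bound and the
equality case can be read off; the Lagrangian reformulation holds because `ω` is `ℝ`-bilinear.
-/

open Matrix

lemma Matrix.ofReal_norm_det_sq_eq_det_conjTranspose_mul {n 𝕜 : Type*} [Fintype n] [DecidableEq n]
    [RCLike 𝕜] (A : Matrix n n 𝕜) : ((‖A.det‖ ^ 2 : ℝ) : 𝕜) = (Aᴴ * A).det := by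
  rw [det_mul, det_conjTranspose, RCLike.star_def, RCLike.conj_mul, RCLike.ofReal_pow]

lemma ofReal_norm_PhiForm_sq_eq_det_gram (v : Fin 3 → EuclideanSpace ℂ (Fin 3)) :
    ((‖PhiForm v‖ ^ 2 : ℝ) : ℂ) = (gram ℂ v).det := by
  rw [gram_eq_conjTranspose_mul (EuclideanSpace.basisFun (Fin 3) ℂ)]
  exact Matrix.ofReal_norm_det_sq_eq_det_conjTranspose_mul _

lemma omegaForm_self (x : EuclideanSpace ℂ (Fin 3)) : omegaForm x x = 0 :=
  inner_self_im (𝕜 := ℂ) x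

lemma omegaForm_swap (x y : EuclideanSpace ℂ (Fin 3)) : omegaForm y x = -omegaForm x y :=
  inner_im_symm (𝕜 := ℂ) y x

noncomputable def omegaBilin : EuclideanSpace ℂ (Fin 3) →ₗ[ℝ] EuclideanSpace ℂ (Fin 3) →ₗ[ℝ] ℝ :=
  LinearMap.mk₂ ℝ omegaForm
    (fun x x' y => by simp [omegaForm])
    (fun r x y => by simp [omegaForm])
    (fun x y y' => by simp [omegaForm])
    (fun r x y => by simp [omegaForm])

lemma LinearMap.forall_mem_span_range_apply_eq_zero_iff {R M N P ι κ : Type*} [CommSemiring R]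
    [AddCommMonoid M] [AddCommMonoid N] [AddCommMonoid P] [Module R M] [Module R N] [Module R P]
    (f : M →ₗ[R] N →ₗ[R] P) (u : ι → M) (w : κ → N) :
    (∀ x ∈ Submodule.span R (Set.range u), ∀ y ∈ Submodule.span R (Set.range w), f x y = 0) ↔
      ∀ i k, f (u i) (w k) = 0 := by
  refine ⟨fun h i k => h _ (Submodule.subset_span ⟨i, rfl⟩) _ (Submodule.subset_span ⟨k, rfl⟩),
    fun h x hx y hy => ?_⟩
  have hbot : Submodule.map₂ f (Submodule.span R (Set.range u)) (Submodule.span R (Set.range w))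
      = ⊥ := by
    rw [Submodule.map₂_span_span, Submodule.span_eq_bot]
    rintro _ ⟨_, ⟨i, rfl⟩, _, ⟨k, rfl⟩, rfl⟩
    exact h i k
  simpa [hbot] using Submodule.apply_mem_map₂ f hx hy

lemma inner_eq_ite_add_omegaForm_mul_I {v : Fin 3 → EuclideanSpace ℂ (Fin 3)}
    (hv : ∀ j k : Fin 3, (inner ℂ (v j) (v k) : ℂ).re = if j = k then 1 else 0) (j k : Fin 3) :
    inner ℂ (v j) (v k) = (if j = k then 1 else 0) + omegaForm (v j) (v k) * Complex.I := by
  apply Complex.ext <;> simp [hv, omegaForm, apply_ite]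

lemma det_gram_of_re_inner_eq_ite {v : Fin 3 → EuclideanSpace ℂ (Fin 3)}
    (hv : ∀ j k : Fin 3, (inner ℂ (v j) (v k) : ℂ).re = if j = k then 1 else 0) :
    (gram ℂ v).det = ((1 - (omegaForm (v 0) (v 1) ^ 2 + omegaForm (v 0) (v 2) ^ 2
      + omegaForm (v 1) (v 2) ^ 2) : ℝ) : ℂ) := by
  rw [det_fin_three]
  simp only [gram_apply, inner_eq_ite_add_omegaForm_mul_I hv, omegaForm_self,
    omegaForm_swap (v 0), omegaForm_swap (v 1) (v 2)]
  simp only [Fin.reduceEq, ↓reduceIte]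
  push_cast
  ring_nf
  rw [Complex.I_sq]
  ring

lemma forall_omegaForm_eq_zero_iff (v : Fin 3 → EuclideanSpace ℂ (Fin 3)) :
    (∀ j k : Fin 3, omegaForm (v j) (v k) = 0) ↔
      omegaForm (v 0) (v 1) = 0 ∧ omegaForm (v 0) (v 2) = 0 ∧ omegaForm (v 1) (v 2) = 0 := by
  refine ⟨fun h => ⟨h 0 1, h 0 2, h 1 2⟩, fun ⟨h01, h02, h12⟩ j k => ?_⟩
  fin_cases j <;> fin_cases k <;>
    simp [omegaForm_self, omegaForm_swap (v 0), omegaForm_swap (v 1) (v 2), h01, h02, h12]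

/-- if `v₁, v₂, v₃ ∈ ℂ³` are orthonormal for the real inner product
`Re⟨·,·⟩`, then `|Φ(v₁,v₂,v₃)| ≤ 1`, with equality iff `ω(v_j, v_k) = 0` for all
`j, k`, i.e. iff the real span of `v₁, v₂, v₃` is a Lagrangian subspace of `ℂ³`. -/
theorem abs_Phi_le_one_of_real_orthonormal
    (v : Fin 3 → EuclideanSpace ℂ (Fin 3))
    (hv : ∀ j k : Fin 3, (inner ℂ (v j) (v k) : ℂ).re = if j = k then 1 else 0) :
    ‖PhiForm v‖ ≤ 1 ∧
    (‖PhiForm v‖ = 1 ↔ ∀ j k : Fin 3, omegaForm (v j) (v k) = 0) ∧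
    (‖PhiForm v‖ = 1 ↔
      ∀ x ∈ Submodule.span ℝ (Set.range v), ∀ y ∈ Submodule.span ℝ (Set.range v),
        omegaForm x y = 0) := by
  have hsq : ‖PhiForm v‖ ^ 2 = 1 - (omegaForm (v 0) (v 1) ^ 2 + omegaForm (v 0) (v 2) ^ 2
      + omegaForm (v 1) (v 2) ^ 2) := by
    exact_mod_cast (ofReal_norm_PhiForm_sq_eq_det_gram v).trans (det_gram_of_re_inner_eq_ite hv)
  have hnorm := norm_nonneg (PhiForm v)
  have heq : ‖PhiForm v‖ = 1 ↔ ∀ j k : Fin 3, omegaForm (v j) (v k) = 0 := by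
    rw [forall_omegaForm_eq_zero_iff]
    constructor
    · intro h
      rw [h] at hsq
      refine ⟨?_, ?_, ?_⟩ <;> nlinarith [sq_nonneg (omegaForm (v 0) (v 1)),
        sq_nonneg (omegaForm (v 0) (v 2)), sq_nonneg (omegaForm (v 1) (v 2))]
    · rintro ⟨h01, h02, h12⟩
      rw [h01, h02, h12] at hsq
      nlinarith
  refine ⟨by nlinarith [sq_nonneg (omegaForm (v 0) (v 1)), sq_nonneg (omegaForm (v 0) (v 2)),
    sq_nonneg (omegaForm (v 1) (v 2))], heq, heq.trans ?_⟩
  exact (omegaBilin.forall_mem_span_range_apply_eq_zero_iff v v).symm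
end

section
/- Let T be a finite-dimensional real normed vector space, U ⊆ T an open neighborhood of 0, and τ : U → T a real-analytic map with τ(0) = 0 and vanishing derivative Dτ(0) = 0. If τ does not vanish identically on any neighborhood of 0, then there exist a vector α ∈ T and an integer N ≥ 2 with the following property: for every smooth curve c : ℝ → T with c(0) = 0 and c′(0) = α, the composition τ ∘ c (which is defined on a neighborhood of 0 in ℝ) has nonzero N-th derivative at t = 0. In particular, there is no smooth curve c with c(0) = 0, c′(0) = α and τ(c(t)) = 0 for all t in a neighborhood of 0; i.e., the infinitesimal deformation α is smoothly obstructed. -/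
open Filter Asymptotics Topology

/-- If a polynomial function `t ↦ ∑_{k ≤ N} t^k • b k` is `o(t^N)` near `0` (punctured),
then all its coefficients vanish. -/
private lemma poly_coeff_zero_of_isLittleO {E : Type*} [NormedAddCommGroup E]
    [NormedSpace ℝ E] :
    ∀ (N : ℕ) (b : ℕ → E),
      ((fun t : ℝ => ∑ k ∈ Finset.range (N + 1), t ^ k • b k) =o[𝓝[≠] (0:ℝ)]
        fun t => t ^ N) → ∀ k ≤ N, b k = 0 := by
  intro N
  induction N with
  | zero =>
    intro b h k hk
    interval_cases k
    have h1 : (fun _ : ℝ => b 0) =o[𝓝[≠] (0:ℝ)] (fun _ => (1:ℝ)) := by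
      simpa using h
    have h2 : Tendsto (fun _ : ℝ => b 0) (𝓝[≠] (0:ℝ)) (𝓝 0) :=
      (isLittleO_one_iff ℝ).1 h1
    exact tendsto_const_nhds_iff.1 h2
  | succ N ih =>
    intro b h
    have hcontF : Continuous (fun t : ℝ => ∑ k ∈ Finset.range (N + 2), t ^ k • b k) :=
      continuous_finset_sum _ fun k _ => (continuous_pow k).smul continuous_const
    have hb0 : b 0 = 0 := by
      have hOB : (fun t : ℝ => t ^ (N + 1)) =o[𝓝[≠] (0:ℝ)] (fun _ => (1:ℝ)) := by
        rw [isLittleO_one_iff]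
        have : Tendsto (fun t : ℝ => t ^ (N + 1)) (𝓝 (0:ℝ)) (𝓝 (0 ^ (N + 1))) :=
          (continuous_pow (N + 1)).tendsto 0
        simpa [zero_pow (Nat.succ_ne_zero N)] using this.mono_left nhdsWithin_le_nhds
      have h1 : Tendsto (fun t : ℝ => ∑ k ∈ Finset.range (N + 2), t ^ k • b k)
          (𝓝[≠] (0:ℝ)) (𝓝 0) := (isLittleO_one_iff ℝ).1 (h.trans_isBigO hOB.isBigO)
      have h2 : Tendsto (fun t : ℝ => ∑ k ∈ Finset.range (N + 2), t ^ k • b k)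
          (𝓝[≠] (0:ℝ)) (𝓝 (b 0)) := by
        have h3 := (hcontF.tendsto 0).mono_left (nhdsWithin_le_nhds (s := {(0:ℝ)}ᶜ))
        have h4 : ∑ k ∈ Finset.range (N + 2), (0:ℝ) ^ k • b k = b 0 := by
          rw [Finset.sum_range_succ']
          simp
        rwa [h4] at h3
      exact tendsto_nhds_unique h2 h1
    have key : ∀ t : ℝ, (∑ k ∈ Finset.range (N + 2), t ^ k • b k)
        = t • ∑ k ∈ Finset.range (N + 1), t ^ k • b (k + 1) := by
      intro t
      rw [Finset.sum_range_succ', Finset.smul_sum]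
      simp [hb0, smul_smul, ← pow_succ']
    have hG : (fun t : ℝ => ∑ k ∈ Finset.range (N + 1), t ^ k • b (k + 1))
        =o[𝓝[≠] (0:ℝ)] fun t => t ^ N := by
      rw [isLittleO_iff]
      intro c hc
      filter_upwards [h.def hc, self_mem_nhdsWithin] with t ht ht0
      have htne : t ≠ 0 := ht0
      rw [key t, norm_smul] at ht
      have htpos : (0:ℝ) < ‖t‖ := norm_pos_iff.2 htne
      have hpow : ‖t ^ (N + 1)‖ = ‖t‖ * ‖t ^ N‖ := by
        rw [norm_pow, norm_pow, pow_succ']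
      rw [hpow, ← mul_assoc, mul_comm c ‖t‖, mul_assoc] at ht
      exact (mul_le_mul_iff_right₀ htpos).1 ht
    have hsucc := ih _ hG
    intro k hk
    cases k with
    | zero => exact hb0
    | succ k => exact hsucc k (Nat.succ_le_succ_iff.1 hk)

private lemma iteratedDeriv_eq_of_isLittleO_of_contDiffOn {E : Type*} [NormedAddCommGroup E]
    [NormedSpace ℝ E] {g : ℝ → E} {ε : ℝ} (hε : 0 < ε) {N : ℕ}
    (hg : ContDiffOn ℝ N g (Metric.ball 0 ε)) {L : E}
    (h : (fun t => g t - t ^ N • L) =o[𝓝 (0:ℝ)] fun t => t ^ N) :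
    iteratedDeriv N g 0 = N.factorial • L := by
  have ht := taylor_isLittleO (convex_ball (0:ℝ) ε) (Metric.mem_ball_self hε) hg
  rw [nhdsWithin_eq_nhds.2 (Metric.ball_mem_nhds 0 hε)] at ht
  simp only [sub_zero] at ht
  set s := Metric.ball (0:ℝ) ε with hsdef
  set B : ℕ → E := fun k => ((k.factorial : ℝ)⁻¹ • iteratedDerivWithin k g s 0)
    - if k = N then L else 0 with hBdef
  have hT : ∀ t : ℝ, taylorWithinEval g N s 0 t - t ^ N • L
      = ∑ k ∈ Finset.range (N + 1), t ^ k • B k := by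
    intro t
    rw [taylor_within_apply]
    simp only [hBdef, smul_sub, Finset.sum_sub_distrib, sub_zero, smul_smul, mul_comm,
      smul_ite, smul_zero, Finset.sum_ite_eq', Finset.mem_range, Nat.lt_succ_self, if_true]
  have hpoly : (fun t : ℝ => ∑ k ∈ Finset.range (N + 1), t ^ k • B k)
      =o[𝓝[≠] (0:ℝ)] fun t => t ^ N := by
    have h2 := (h.sub ht).mono (nhdsWithin_le_nhds (s := {(0:ℝ)}ᶜ))
    refine h2.congr' (Filter.Eventually.of_forall fun t => ?_) (by rfl)
    show g t - t ^ N • L - (g t - taylorWithinEval g N s 0 t)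
      = ∑ k ∈ Finset.range (N + 1), t ^ k • B k
    rw [← hT t]
    abel
  have hBN := poly_coeff_zero_of_isLittleO N B hpoly N le_rfl
  have hL : ((N.factorial : ℝ)⁻¹ • iteratedDerivWithin N g s 0) = L := by
    have := sub_eq_zero.1 hBN
    simpa [hBdef] using this
  have hs : iteratedDerivWithin N g s 0 = iteratedDeriv N g 0 :=
    iteratedDerivWithin_of_isOpen Metric.isOpen_ball (Metric.mem_ball_self hε)
  rw [← hs, ← hL, ← Nat.cast_smul_eq_nsmul ℝ, smul_smul,
    mul_inv_cancel₀ (by exact_mod_cast Nat.factorial_ne_zero N), one_smul]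

/-- let `τ : U → T` be real-analytic on an open neighborhood `U` of `0`
in a finite-dimensional real normed space `T`, with `τ 0 = 0` and `Dτ(0) = 0`.
If `τ` does not vanish identically on any neighborhood of `0`, then there are a
vector `α ∈ T` and an integer `N ≥ 2` such that for every smooth curve `c` with
`c 0 = 0` and `c' 0 = α`, the `N`-th derivative of `τ ∘ c` at `0` is nonzero; in
particular no such curve satisfies `τ (c t) = 0` near `0`: the infinitesimal
deformation `α` is smoothly obstructed. -/
theorem exists_formally_obstructed_direction
    {T : Type*} [NormedAddCommGroup T] [NormedSpace ℝ T] [FiniteDimensional ℝ T]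
    (U : Set T) (hU : IsOpen U) (h0 : (0 : T) ∈ U)
    (τ : T → T) (hτ : ∀ x ∈ U, AnalyticAt ℝ τ x)
    (hτ0 : τ 0 = 0) (hDτ0 : fderiv ℝ τ 0 = 0)
    (hnv : ∀ V ∈ nhds (0 : T), ∃ x ∈ V ∩ U, τ x ≠ 0) :
    ∃ (α : T) (N : ℕ), 2 ≤ N ∧
      ∀ c : ℝ → T, ContDiff ℝ (⊤ : ℕ∞) c → c 0 = 0 → deriv c 0 = α →
        (iteratedDeriv N (fun t => τ (c t)) 0 ≠ 0 ∧
          ¬ ∀ᶠ t in nhds (0 : ℝ), τ (c t) = 0) := by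
  classical
  obtain ⟨p, hp⟩ := hτ 0 h0
  obtain ⟨r, hpr⟩ := hp
  -- existence of a coefficient with nonzero diagonal restriction
  have hex : ∃ n, ∃ y : T, p n (fun _ => y) ≠ 0 := by
    by_contra hcon
    push_neg at hcon
    obtain ⟨x, ⟨hxV, hxU⟩, hx0⟩ := hnv (EMetric.ball 0 r) (EMetric.ball_mem_nhds 0 hpr.r_pos)
    apply hx0
    have hs := hpr.hasSum (y := x) hxV
    simp only [hcon] at hs
    simpa using hs.unique hasSum_zero
  set N := Nat.find hex with hNdef
  obtain ⟨α, hα⟩ := Nat.find_spec hex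
  set L := p N (fun _ => α) with hLdef
  have hmin : ∀ k, k < N → ∀ y : T, p k (fun _ => y) = 0 := by
    intro k hk y
    by_contra hy
    exact Nat.find_min hex hk ⟨y, hy⟩
  have hN2 : 2 ≤ N := by
    have h1 : ∀ m ≤ 1, ¬∃ y : T, p m (fun _ => y) ≠ 0 := by
      intro m hm
      push_neg
      intro y
      interval_cases m
      · have := hpr.factorial_smul (y := y) 0
        simp only [Nat.factorial_zero, one_smul, iteratedFDeriv_zero_apply] at this
        rw [this, hτ0]
      · have := hpr.factorial_smul (y := y) 1
        simp only [Nat.factorial_one, one_smul, iteratedFDeriv_one_apply] at this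
        rw [this, hDτ0]
        rfl
    have := (Nat.lt_find_iff hex 1).2 h1
    omega
  have hN0 : 0 < N := by omega
  have : Nonempty (Fin N) := ⟨⟨0, hN0⟩⟩
  refine ⟨α, N, hN2, ?_⟩
  intro c hc hc0 hc'
  -- basic curve asymptotics
  have hcont : Tendsto c (𝓝 (0:ℝ)) (𝓝 (0:T)) := by
    have := (hc.continuous).tendsto 0
    rwa [hc0] at this
  have hcd : HasDerivAt c α 0 := by
    have hdiff : DifferentiableAt ℝ c 0 := (hc.differentiable (by simp)).differentiableAt
    have := hdiff.hasDerivAt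
    rwa [hc'] at this
  have hc1 : c =O[𝓝 (0:ℝ)] fun t => t := by
    have := hcd.hasFDerivAt.isBigO_sub
    simpa [hc0] using this
  have he : (fun t : ℝ => c t - t • α) =o[𝓝 (0:ℝ)] fun t => t := by
    have := hcd.hasFDerivAt.isLittleO
    simpa [hc0] using this
  -- key pointwise identity
  have hpt : ∀ t : ℝ, τ (0 + c t) - p.partialSum (N + 1) (c t)
      + (p N (fun _ : Fin N => c t) - p N (fun _ : Fin N => t • α))
      = τ (c t) - t ^ N • L := by
    intro t
    have h1 : p.partialSum (N + 1) (c t) = p N (fun _ : Fin N => c t) := by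
      rw [FormalMultilinearSeries.partialSum, Finset.sum_range_succ,
        Finset.sum_eq_zero fun k hk => hmin k (Finset.mem_range.1 hk) (c t), zero_add]
    have h2 : p N (fun _ : Fin N => t • α) = t ^ N • L := by
      have h3 : (fun _ : Fin N => t • α) = fun _ : Fin N => t • α := rfl
      rw [show (fun _ : Fin N => t • α) = (fun i : Fin N => t • (fun _ : Fin N => α) i) from rfl,
        ContinuousMultilinearMap.map_smul_univ]
      simp [hLdef]
    rw [h1, h2, zero_add]
    abel
  -- term A : analytic remainder
  have hA0 := (hpr.hasFPowerSeriesAt.isBigO_sub_partialSum_pow (N + 1)).comp_tendsto hcont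
  have hA1 : (fun t : ℝ => ‖c t‖ ^ (N + 1)) =O[𝓝 (0:ℝ)] fun t => t ^ (N + 1) :=
    hc1.norm_left.pow (N + 1)
  have hA2 : (fun t : ℝ => t ^ (N + 1)) =o[𝓝 (0:ℝ)] fun t => t ^ N := by
    rw [isLittleO_iff]
    intro d hd
    filter_upwards [Metric.closedBall_mem_nhds (0:ℝ) hd] with t ht
    have habs : |t| ≤ d := by simpa [Real.dist_eq] using ht
    rw [norm_pow, norm_pow, pow_succ']
    exact mul_le_mul_of_nonneg_right (by simpa [Real.norm_eq_abs] using habs)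
      (pow_nonneg (norm_nonneg t) N)
  have hA : (fun t : ℝ => τ (0 + c t) - p.partialSum (N + 1) (c t)) =o[𝓝 (0:ℝ)]
      fun t => t ^ N := (hA0.trans hA1).trans_isLittleO hA2
  -- term B : multilinear difference
  have hmax : (fun t : ℝ => max ‖c t‖ ‖t • α‖) =O[𝓝 (0:ℝ)] fun t => t := by
    obtain ⟨C, hC⟩ := hc1.bound
    rw [isBigO_iff]
    refine ⟨max C ‖α‖, ?_⟩
    filter_upwards [hC] with t ht
    have hnn : 0 ≤ max ‖c t‖ ‖t • α‖ := le_max_of_le_left (norm_nonneg _)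
    rw [Real.norm_of_nonneg hnn]
    refine max_le ?_ ?_
    · exact ht.trans (mul_le_mul_of_nonneg_right (le_max_left _ _) (norm_nonneg t))
    · rw [norm_smul, mul_comm]
      exact mul_le_mul_of_nonneg_right (le_max_right _ _) (norm_nonneg t)
  have hDo : (fun t : ℝ => max ‖c t‖ ‖t • α‖ ^ (N - 1) * ‖c t - t • α‖) =o[𝓝 (0:ℝ)]
      fun t => t ^ N := by
    have h1 := (hmax.pow (N - 1)).mul_isLittleO he.norm_left
    have h2 : (fun t : ℝ => t ^ (N - 1) * t) = fun t => t ^ N := by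
      funext t
      rw [← pow_succ, Nat.sub_add_cancel hN0]
    rwa [h2] at h1
  have hB : (fun t : ℝ => p N (fun _ : Fin N => c t) - p N (fun _ : Fin N => t • α))
      =o[𝓝 (0:ℝ)] fun t => t ^ N := by
    refine IsBigO.trans_isLittleO ?_ hDo
    refine IsBigO.of_bound (‖p N‖ * N) (Filter.Eventually.of_forall fun t => ?_)
    have h1 := (p N).norm_image_sub_le (fun _ : Fin N => c t) (fun _ : Fin N => t • α)
    have h2 : ((fun _ : Fin N => c t) - fun _ : Fin N => t • α)
        = fun _ : Fin N => c t - t • α := rfl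
    rw [h2, pi_norm_const, pi_norm_const, pi_norm_const, Fintype.card_fin] at h1
    have hnn : 0 ≤ max ‖c t‖ ‖t • α‖ ^ (N - 1) * ‖c t - t • α‖ :=
      mul_nonneg (pow_nonneg (le_max_of_le_left (norm_nonneg _)) _) (norm_nonneg _)
    rw [Real.norm_of_nonneg hnn]
    calc ‖p N (fun _ : Fin N => c t) - p N (fun _ : Fin N => t • α)‖
        ≤ ‖p N‖ * N * (max ‖c t‖ ‖t • α‖) ^ (N - 1) * ‖c t - t • α‖ := h1
      _ = ‖p N‖ * N * ((max ‖c t‖ ‖t • α‖) ^ (N - 1) * ‖c t - t • α‖) := by ring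
  -- combine
  have hkey : (fun t : ℝ => τ (c t) - t ^ N • L) =o[𝓝 (0:ℝ)] fun t => t ^ N := by
    have hsum := hA.add hB
    have h3 : (fun t : ℝ => τ (0 + c t) - p.partialSum (N + 1) (c t)
        + (p N (fun _ : Fin N => c t) - p N (fun _ : Fin N => t • α)))
        = fun t => τ (c t) - t ^ N • L := funext fun t => hpt t
    rwa [h3] at hsum
  -- analyticity of the composition
  have hpre : c ⁻¹' U ∈ 𝓝 (0:ℝ) :=
    hc.continuous.continuousAt.preimage_mem_nhds (by rw [hc0]; exact hU.mem_nhds h0)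
  obtain ⟨ε, hε, hεU⟩ := Metric.mem_nhds_iff.1 hpre
  have hτU : ContDiffOn ℝ N τ U :=
    (AnalyticOnNhd.contDiffOn_of_completeSpace (fun x hx => hτ x hx)).of_le le_top
  have hcN : ContDiff ℝ N c := hc.of_le (by exact_mod_cast le_top)
  have hgN : ContDiffOn ℝ N (fun t => τ (c t)) (Metric.ball 0 ε) :=
    hτU.comp hcN.contDiffOn (fun t ht => hεU ht)
  have hd := iteratedDeriv_eq_of_isLittleO_of_contDiffOn hε hgN hkey
  have hLne : N.factorial • L ≠ 0 := by
    intro hcontra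
    rw [← Nat.cast_smul_eq_nsmul ℝ] at hcontra
    rcases smul_eq_zero.1 hcontra with h | h
    · exact Nat.factorial_ne_zero N (by exact_mod_cast h)
    · exact hα (hLdef ▸ h)
  constructor
  · rw [hd]; exact hLne
  · intro hev
    have heq : (fun t => τ (c t)) =ᶠ[𝓝 (0:ℝ)] fun _ => (0:T) := hev
    have h4 := heq.iteratedDeriv_eq N
    rw [hd] at h4
    apply hLne
    rw [h4, iteratedDeriv_eq_iteratedFDeriv, iteratedFDeriv_zero_fun]
    rfl
end
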